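/- arXiv:2103.06679 — 5 statements merged into one kernel-verified Lean document; each statement's English description precedes it below -/
import Mathlib

section
/- Let p be a prime with p > 2d, and let g ∈ GL_d(Z/p²Z) be such that g ≡ 1 + u mod p for a matrix u with u^p ≡ 0 mod p. If the image of g in GL_d(Z/pZ) has order exactly p, then g has order exactly p² in GL_d(Z/p²Z). -/
open Finset

section Aux

variable {p : ℕ}

private lemma aux_cast_zero_iff (hp : p.Prime) (x : ZMod (p ^ 2)) :
    ZMod.castHom (dvd_pow_self p two_ne_zero) (ZMod p) x = 0 ↔ (p : ZMod (p ^ 2)) * x = 0 := by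
  haveI : NeZero (p ^ 2) := ⟨pow_ne_zero 2 hp.ne_zero⟩
  obtain ⟨a, rfl⟩ := ZMod.natCast_zmod_surjective x
  rw [map_natCast, ZMod.natCast_eq_zero_iff, ← Nat.cast_mul,
    ZMod.natCast_eq_zero_iff, pow_two]
  exact (mul_dvd_mul_iff_left (a := p) (by exact_mod_cast hp.ne_zero)).symm

private lemma aux_mul_zero (hp : p.Prime) (x y : ZMod (p ^ 2))
    (hx : ZMod.castHom (dvd_pow_self p two_ne_zero) (ZMod p) x = 0)
    (hy : ZMod.castHom (dvd_pow_self p two_ne_zero) (ZMod p) y = 0) : x * y = 0 := by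
  haveI : NeZero (p ^ 2) := ⟨pow_ne_zero 2 hp.ne_zero⟩
  obtain ⟨a, rfl⟩ := ZMod.natCast_zmod_surjective x
  obtain ⟨b, rfl⟩ := ZMod.natCast_zmod_surjective y
  rw [map_natCast, ZMod.natCast_eq_zero_iff] at hx hy
  rw [← Nat.cast_mul, ZMod.natCast_eq_zero_iff, pow_two]
  exact mul_dvd_mul hx hy

end Aux

section AuxM

variable {p d : ℕ}

private lemma aux_matrix_smul_iff (hp : p.Prime) (A : Matrix (Fin d) (Fin d) (ZMod (p ^ 2))) :
    A.map (ZMod.castHom (dvd_pow_self p two_ne_zero) (ZMod p)) = 0 ↔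
      (p : ZMod (p ^ 2)) • A = 0 := by
  constructor
  · intro h
    ext i j
    have h' := congrFun (congrFun h i) j
    simp only [Matrix.map_apply, Matrix.zero_apply] at h'
    simpa using (aux_cast_zero_iff hp (A i j)).mp h'
  · intro h
    ext i j
    have h' := congrFun (congrFun h i) j
    simp only [Matrix.smul_apply, Matrix.zero_apply, smul_eq_mul] at h'
    simpa [Matrix.map_apply] using (aux_cast_zero_iff hp (A i j)).mpr h'

private lemma aux_matrix_mul (hp : p.Prime) (A B : Matrix (Fin d) (Fin d) (ZMod (p ^ 2)))
    (hA : A.map (ZMod.castHom (dvd_pow_self p two_ne_zero) (ZMod p)) = 0)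
    (hB : B.map (ZMod.castHom (dvd_pow_self p two_ne_zero) (ZMod p)) = 0) : A * B = 0 := by
  ext i j
  rw [Matrix.mul_apply, Matrix.zero_apply]
  refine Finset.sum_eq_zero fun k _ => ?_
  have hA' := congrFun (congrFun hA i) k
  have hB' := congrFun (congrFun hB k) j
  simp only [Matrix.map_apply, Matrix.zero_apply] at hA' hB'
  exact aux_mul_zero hp _ _ hA' hB'

private lemma aux_sq_zero_pow {R : Type*} [Ring R] (w : R) (h : w * w = 0) (n : ℕ) :
    (1 + w) ^ n = 1 + n • w := by
  induction n with
  | zero => simp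
  | succ n ih =>
    rw [pow_succ, ih, add_mul, one_mul, mul_add, mul_one, smul_mul_assoc, h, smul_zero,
      add_zero, succ_nsmul]
    abel

end AuxM
/-- Let `p > 2d` be a prime and `g ∈ GL_d(ℤ/p²ℤ)` with `g ≡ 1 + u mod p` where
`u^p ≡ 0 mod p`.  If the image of `g` in `GL_d(ℤ/pℤ)` has order exactly `p`,
then `g` has order exactly `p²`. -/
theorem orderOf_eq_p_sq {d p : ℕ} (hp : p.Prime) (hpd : 2 * d < p)
    (g : GL (Fin d) (ZMod (p ^ 2)))
    (u : Matrix (Fin d) (Fin d) (ZMod p))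
    (hgu : (Matrix.GeneralLinearGroup.map
        (ZMod.castHom (dvd_pow_self p two_ne_zero) (ZMod p)) g : Matrix (Fin d) (Fin d) (ZMod p))
      = 1 + u)
    (hu : u ^ p = 0)
    (hord : orderOf (Matrix.GeneralLinearGroup.map
        (ZMod.castHom (dvd_pow_self p two_ne_zero) (ZMod p)) g) = p) :
    orderOf g = p ^ 2 := by
  haveI : Fact p.Prime := ⟨hp⟩
  haveI : Fact (1 < p) := ⟨hp.one_lt⟩
  set φ := ZMod.castHom (dvd_pow_self p two_ne_zero) (ZMod p) with hφ
  rcases Nat.eq_zero_or_pos d with rfl | hd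
  · have h1 : Matrix.GeneralLinearGroup.map φ g = 1 := Units.ext (Subsingleton.elim _ _)
    rw [h1, orderOf_one] at hord
    exact absurd hord.symm hp.ne_one
  haveI : Nonempty (Fin d) := ⟨⟨0, hd⟩⟩
  have hdp2 : d ≤ p - 2 := by omega
  -- u ≠ 0
  have hune : u ≠ 0 := by
    rintro rfl
    rw [add_zero] at hgu
    have h1 : Matrix.GeneralLinearGroup.map φ g = 1 := Units.ext (by simpa using hgu)
    rw [h1, orderOf_one] at hord
    exact hp.ne_one hord.symm
  -- u ^ d = 0
  have hud : u ^ d = 0 := by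
    have hnil : IsNilpotent u := ⟨p, hu⟩
    have hcp : u.charpoly = Polynomial.X ^ (Fintype.card (Fin d)) := by
      rw [← sub_eq_zero]
      exact (Matrix.isNilpotent_charpoly_sub_pow_of_isNilpotent hnil).eq_zero
    have h := u.aeval_self_charpoly
    rw [hcp] at h
    simpa using h
  -- nilpotency index r
  have hex : ∃ n, u ^ n = 0 := ⟨d, hud⟩
  set r := Nat.find hex with hrdef
  have hr0 : u ^ r = 0 := Nat.find_spec hex
  have hrd : r ≤ d := Nat.find_min' hex hud
  have hrmin : ∀ m, m < r → u ^ m ≠ 0 := fun m hm => Nat.find_min hex hm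
  have hr2 : 2 ≤ r := by
    by_contra h
    interval_cases r
    · rw [pow_zero] at hr0; exact one_ne_zero hr0
    · exact hune (by simpa using hr0)
  -- matrices
  have hcoe : ((Matrix.GeneralLinearGroup.map φ g : GL (Fin d) (ZMod p)) :
      Matrix (Fin d) (Fin d) (ZMod p))
      = ((g : Matrix (Fin d) (Fin d) (ZMod (p ^ 2)))).map φ := rfl
  set G : Matrix (Fin d) (Fin d) (ZMod (p ^ 2)) := (g : Matrix (Fin d) (Fin d) (ZMod (p ^ 2)))
    with hG
  set V := G - 1 with hV
  have hGV : G = 1 + V := by rw [hV]; abel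
  have hVu : V.map φ = u := by
    rw [hV, ← RingHom.mapMatrix_apply, map_sub, map_one, RingHom.mapMatrix_apply, ← hcoe, hgu]
    abel
  have hpowV : ∀ j : ℕ, (V ^ j).map φ = u ^ j := fun j => by
    rw [← RingHom.mapMatrix_apply, map_pow, RingHom.mapMatrix_apply, hVu]
  have hsm : ∀ j : ℕ, r ≤ j → (p : ZMod (p ^ 2)) • V ^ j = 0 := fun j hj => by
    refine (aux_matrix_smul_iff hp _).mp ?_
    rw [hpowV, pow_eq_zero_of_le hj hr0]
  -- (1+u)^p = 1
  have h1u : (1 + u) ^ p = 1 := by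
    rw [add_pow_char_of_commute p (Commute.one_left u), one_pow, hu, add_zero]
  have hGp : (G ^ p).map φ = 1 := by
    rw [← RingHom.mapMatrix_apply, map_pow, RingHom.mapMatrix_apply, ← hcoe, hgu, h1u]
  set W := G ^ p - 1 with hW
  have hWφ : W.map φ = 0 := by
    rw [hW, ← RingHom.mapMatrix_apply, map_sub, map_one, RingHom.mapMatrix_apply, hGp, sub_self]
  have hWW : W * W = 0 := aux_matrix_mul hp _ _ hWφ hWφ
  -- g ^ (p^2) = 1
  have hg2 : g ^ p ^ 2 = 1 := by
    apply Units.ext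
    rw [Units.val_pow_eq_pow_val, Units.val_one]
    show G ^ p ^ 2 = 1
    have h3 : G ^ p ^ 2 = (G ^ p) ^ p := by
      rw [← pow_mul]
      exact congrArg (fun n => G ^ n) (pow_two p)
    have hGpW : G ^ p = 1 + W := by rw [hW]; abel
    rw [h3, hGpW, aux_sq_zero_pow _ hWW, ← Nat.cast_smul_eq_nsmul (ZMod (p ^ 2)),
      (aux_matrix_smul_iff hp _).mp hWφ, add_zero]
  -- g ^ p ≠ 1
  have hgpne : g ^ p ≠ 1 := by
    intro hcon
    have hGp1 : G ^ p = 1 := by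
      have h4 := congrArg (Units.val) hcon
      rwa [Units.val_pow_eq_pow_val, Units.val_one] at h4
    have hsum : ∑ m ∈ Finset.range (p + 1),
        V ^ m * ((p.choose m : ℕ) : Matrix (Fin d) (Fin d) (ZMod (p ^ 2))) = 1 := by
      have hb := (Commute.one_right V).add_pow p
      simp only [one_pow, mul_one] at hb
      rw [← hb, add_comm, ← hGV, hGp1]
    have hterm : ∀ j c : ℕ, r ≤ j →
        V ^ j * ((p * c : ℕ) : Matrix (Fin d) (Fin d) (ZMod (p ^ 2))) = 0 := by
      intro j c hj
      rw [← (Nat.cast_commute (p * c)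
          (V ^ j)).eq, ← nsmul_eq_mul, Nat.mul_comm, mul_smul,
        ← Nat.cast_smul_eq_nsmul (ZMod (p ^ 2)) p (V ^ j), hsm j hj, smul_zero]
    have hf0 : ∀ m, 2 ≤ m → m ≤ p →
        V ^ (r - 2) * (V ^ m * ((p.choose m : ℕ) : Matrix (Fin d) (Fin d) (ZMod (p ^ 2)))) = 0 := by
      intro m h2m hmp
      rcases eq_or_lt_of_le hmp with rfl | hlt
      · rw [Nat.choose_self, Nat.cast_one, mul_one, ← pow_add]
        have he : r - 2 + m = r + (m - 2) := by omega
        rw [he, pow_add]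
        refine aux_matrix_mul hp _ _ (by rw [hpowV, hr0]) ?_
        rw [hpowV]
        exact pow_eq_zero_of_le (by omega) hr0
      · obtain ⟨c, hc⟩ := hp.dvd_choose_self (by omega) hlt
        rw [hc, ← mul_assoc, ← pow_add]
        exact hterm _ _ (by omega)
    have hS : ∑ m ∈ Finset.range (p + 1),
        V ^ (r - 2) * (V ^ m * ((p.choose m : ℕ) : Matrix (Fin d) (Fin d) (ZMod (p ^ 2))))
        = V ^ (r - 2) := by
      rw [← Finset.mul_sum, hsum, mul_one]
    have hsplit : ∑ m ∈ Finset.range (p + 1),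
        V ^ (r - 2) * (V ^ m * ((p.choose m : ℕ) : Matrix (Fin d) (Fin d) (ZMod (p ^ 2))))
        = V ^ (r - 2) + (p : ZMod (p ^ 2)) • V ^ (r - 1) := by
      rw [Finset.range_eq_Ico, ← Finset.sum_Ico_consecutive _ (Nat.zero_le 2) (by omega : 2 ≤ p + 1)]
      have hz : ∑ m ∈ Finset.Ico 2 (p + 1),
          V ^ (r - 2) * (V ^ m * ((p.choose m : ℕ) : Matrix (Fin d) (Fin d) (ZMod (p ^ 2)))) = 0 :=
        Finset.sum_eq_zero fun m hm => by
          obtain ⟨h2m, hmp⟩ := Finset.mem_Ico.mp hm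
          exact hf0 m h2m (by omega)
      rw [hz, add_zero, ← Finset.range_eq_Ico, Finset.sum_range_succ, Finset.sum_range_one]
      congr 1
      · simp
      · rw [pow_one, Nat.choose_one_right, ← mul_assoc, ← pow_succ,
          show r - 2 + 1 = r - 1 by omega, ← (Nat.cast_commute p (V ^ (r - 1))).eq,
          ← nsmul_eq_mul, ← Nat.cast_smul_eq_nsmul (ZMod (p ^ 2)) p (V ^ (r - 1))]
    have hzero : (p : ZMod (p ^ 2)) • V ^ (r - 1) = 0 := by
      have := hS.symm.trans hsplit
      exact (add_eq_left.mp this.symm)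
    have hu1 : u ^ (r - 1) = 0 := by
      have h5 := (aux_matrix_smul_iff hp _).mpr hzero
      rwa [hpowV] at h5
    exact hrmin (r - 1) (by omega) hu1
  -- conclude
  have hdvd : orderOf g ∣ p ^ 2 := orderOf_dvd_of_pow_eq_one hg2
  have hpdvd : p ∣ orderOf g := by
    have h6 := orderOf_map_dvd (Matrix.GeneralLinearGroup.map φ) g
    rwa [hord] at h6
  obtain ⟨k, hk2, hke⟩ := (Nat.dvd_prime_pow hp).mp hdvd
  interval_cases k
  · rw [hke] at hpdvd; simp at hpdvd; omega
  · exfalso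
    apply hgpne
    rw [pow_one] at hke
    have h7 := pow_orderOf_eq_one g
    rw [hke] at h7
    exact h7
  · exact hke
end

section
/- For p = 2, the exponential series converges on 4·M_d(Z_2) and defines an isometric bijection from 4·M_d(Z_2) onto ker(GL_d(Z_2) → GL_d(Z/4Z)). -/
/-- The `2`-adic matrix exponential, `exp x = ∑ xⁿ/n!`. -/
noncomputable def dyadicMatExp {d : ℕ} (x : Matrix (Fin d) (Fin d) ℚ_[2]) :
    Matrix (Fin d) (Fin d) ℚ_[2] :=
  ∑' n : ℕ, ((Nat.factorial n : ℚ_[2]))⁻¹ • x ^ n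

/-- The sup-norm of a matrix over `ℚ_2`. -/
noncomputable def matDyadicNorm {d : ℕ} (x : Matrix (Fin d) (Fin d) ℚ_[2]) : ℝ :=
  ⨆ i : Fin d, ⨆ j : Fin d, ‖x i j‖

namespace DyadicAux

lemma digitsum_pos {n : ℕ} (hn : n ≠ 0) : 1 ≤ (Nat.digits 2 n).sum := by
  have hne : Nat.digits 2 n ≠ [] := Nat.digits_ne_nil_iff_ne_zero.mpr hn
  have hlast := Nat.getLast_digit_ne_zero 2 hn
  have hmem : (Nat.digits 2 n).getLast hne ∈ Nat.digits 2 n := List.getLast_mem hne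
  calc 1 ≤ (Nat.digits 2 n).getLast hne := Nat.one_le_iff_ne_zero.mpr hlast
    _ ≤ (Nat.digits 2 n).sum := List.single_le_sum (fun x _ => Nat.zero_le x) _ hmem

lemma val2_factorial_le (n : ℕ) : padicValNat 2 (Nat.factorial (n+1)) ≤ n := by
  have h := sub_one_mul_padicValNat_factorial (p := 2) (n+1)
  simp only [show (2:ℕ) - 1 = 1 from rfl, one_mul] at h
  have hs := digitsum_pos (n := n+1) (by omega)
  omega

lemma norm_fact_inv_le (n : ℕ) : ‖((Nat.factorial (n+1) : ℚ_[2]))⁻¹‖ ≤ (2:ℝ) ^ n := by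
  have h0 : ((Nat.factorial (n+1) : ℚ_[2])) ≠ 0 := by
    exact_mod_cast Nat.cast_ne_zero.mpr (Nat.factorial_ne_zero (n+1))
  rw [norm_inv, Padic.norm_eq_zpow_neg_valuation h0, Padic.valuation_natCast, ← zpow_neg, neg_neg]
  have : ((padicValNat 2 (Nat.factorial (n+1)) : ℤ)) ≤ (n : ℤ) := by
    exact_mod_cast val2_factorial_le n
  calc ((2:ℝ)) ^ (padicValNat 2 (Nat.factorial (n+1)) : ℤ) ≤ (2:ℝ) ^ (n : ℤ) := by
        apply zpow_le_zpow_right₀ (by norm_num) this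
    _ = (2:ℝ) ^ n := by rw [zpow_natCast]

lemma arith0 (n : ℕ) : (2:ℝ) ^ n * (4:ℝ)⁻¹ ^ n = (2:ℝ)⁻¹ ^ n := by
  rw [← mul_pow]; norm_num

lemma arith1 (n : ℕ) : (2:ℝ) ^ n * (4:ℝ)⁻¹ ^ (n+1) = (2:ℝ)⁻¹ ^ (n+2) := by
  rw [pow_succ, ← mul_assoc, arith0, pow_succ, pow_succ]; ring

lemma arith2 (c : ℝ) (n : ℕ) : (2:ℝ) ^ (n+1) * (c * (4:ℝ)⁻¹ ^ (n+1)) = c * (2:ℝ)⁻¹ ^ (n+1) := by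
  rw [mul_comm c, ← mul_assoc, arith0]; ring

variable {d : ℕ}

/-- All entries bounded by `c`. -/
def Bdd (c : ℝ) (x : Matrix (Fin d) (Fin d) ℚ_[2]) : Prop := ∀ i j, ‖x i j‖ ≤ c

lemma Bdd.mono {c c' : ℝ} {x : Matrix (Fin d) (Fin d) ℚ_[2]} (h : Bdd c x) (hcc : c ≤ c') :
    Bdd c' x := fun i j => (h i j).trans hcc

lemma Bdd.add_max {c c' : ℝ} {x y : Matrix (Fin d) (Fin d) ℚ_[2]} (hx : Bdd c x) (hy : Bdd c' y) :
    Bdd (max c c') (x + y) := fun i j => by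
  calc ‖(x + y) i j‖ = ‖x i j + y i j‖ := rfl
    _ ≤ max ‖x i j‖ ‖y i j‖ := Padic.nonarchimedean _ _
    _ ≤ max c c' := max_le_max (hx i j) (hy i j)

lemma Bdd.neg {c : ℝ} {x : Matrix (Fin d) (Fin d) ℚ_[2]} (hx : Bdd c x) : Bdd c (-x) :=
  fun i j => by simpa using hx i j

lemma Bdd.sub_max {c c' : ℝ} {x y : Matrix (Fin d) (Fin d) ℚ_[2]} (hx : Bdd c x) (hy : Bdd c' y) :
    Bdd (max c c') (x - y) := by
  simpa [sub_eq_add_neg] using hx.add_max hy.neg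

lemma Bdd.mul {c c' : ℝ} {x y : Matrix (Fin d) (Fin d) ℚ_[2]} (hc : 0 ≤ c) (hc' : 0 ≤ c')
    (hx : Bdd c x) (hy : Bdd c' y) : Bdd (c * c') (x * y) := fun i j => by
  rw [Matrix.mul_apply]
  apply IsUltrametricDist.norm_sum_le_of_forall_le_of_nonneg (mul_nonneg hc hc')
  intro k _
  rw [Padic.padicNormE.mul]
  exact mul_le_mul (hx i k) (hy k j) (norm_nonneg _) hc

lemma Bdd.one : Bdd 1 (1 : Matrix (Fin d) (Fin d) ℚ_[2]) := fun i j => by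
  rw [Matrix.one_apply]
  split <;> simp

lemma Bdd.zero {c : ℝ} (hc : 0 ≤ c) : Bdd c (0 : Matrix (Fin d) (Fin d) ℚ_[2]) := fun i j => by
  simpa using hc

lemma Bdd.pow {c : ℝ} {x : Matrix (Fin d) (Fin d) ℚ_[2]} (hc : 0 ≤ c) (hx : Bdd c x) :
    ∀ n : ℕ, Bdd (c ^ (n+1)) (x ^ (n+1))
  | 0 => by simpa using hx
  | (n+1) => by
    have := (Bdd.pow hc hx n).mul (pow_nonneg hc _) hc hx
    rw [← pow_succ, ← pow_succ] at this
    exact this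

lemma Bdd.smul {c t : ℝ} {a : ℚ_[2]} {x : Matrix (Fin d) (Fin d) ℚ_[2]}
    (ha : ‖a‖ ≤ t) (hx : Bdd c x) : Bdd (t * c) (a • x) := fun i j => by
  have h : (a • x) i j = a * x i j := rfl
  rw [h, Padic.padicNormE.mul]
  exact mul_le_mul ha (hx i j) (norm_nonneg _) ((norm_nonneg a).trans ha)

/-! ### The exponential series -/

lemma term_zero (x : Matrix (Fin d) (Fin d) ℚ_[2]) :
    ((Nat.factorial 0 : ℚ_[2]))⁻¹ • x ^ 0 = 1 := by
  simp

lemma term_one (x : Matrix (Fin d) (Fin d) ℚ_[2]) :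
    ((Nat.factorial 1 : ℚ_[2]))⁻¹ • x ^ 1 = x := by
  simp

lemma term_bdd {x : Matrix (Fin d) (Fin d) ℚ_[2]} (hx : Bdd (4:ℝ)⁻¹ x) (n : ℕ) :
    Bdd ((2:ℝ)⁻¹ ^ (n+2)) (((Nat.factorial (n+1) : ℚ_[2]))⁻¹ • x ^ (n+1)) := by
  have h := Bdd.smul (norm_fact_inv_le n) (Bdd.pow (by norm_num) hx n)
  rwa [arith1] at h

lemma term_bdd' {x : Matrix (Fin d) (Fin d) ℚ_[2]} (hx : Bdd (4:ℝ)⁻¹ x) (n : ℕ) :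
    Bdd ((2:ℝ)⁻¹ ^ n) (((Nat.factorial n : ℚ_[2]))⁻¹ • x ^ n) := by
  cases n with
  | zero => rw [term_zero]; simpa using Bdd.one
  | succ n =>
    exact (term_bdd hx n).mono
      (pow_le_pow_of_le_one (by norm_num) (by norm_num) (by omega))

lemma summable_term {x : Matrix (Fin d) (Fin d) ℚ_[2]} (hx : Bdd (4:ℝ)⁻¹ x) :
    Summable (fun n : ℕ => ((Nat.factorial n : ℚ_[2]))⁻¹ • x ^ n) := by
  refine Pi.summable.mpr fun i => Pi.summable.mpr fun j => ?_
  refine Summable.of_norm_bounded (g := fun n => (2:ℝ)⁻¹ ^ n)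
    (summable_geometric_of_lt_one (by norm_num) (by norm_num)) fun n => ?_
  exact term_bdd' hx n i j

lemma exp_apply {x : Matrix (Fin d) (Fin d) ℚ_[2]} (hx : Bdd (4:ℝ)⁻¹ x) (i j : Fin d) :
    dyadicMatExp x i j = ∑' n : ℕ, (((Nat.factorial n : ℚ_[2]))⁻¹ • x ^ n) i j := by
  erw [dyadicMatExp, tsum_apply (summable_term hx), tsum_apply (Pi.summable.mp (summable_term hx) i)]

lemma exp_zero : dyadicMatExp (0 : Matrix (Fin d) (Fin d) ℚ_[2]) = 1 := by
  rw [dyadicMatExp, tsum_eq_single 0 ?h]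
  · exact term_zero 0
  case h =>
    intro n hn
    obtain ⟨m, rfl⟩ : ∃ m, n = m + 1 := ⟨n - 1, by omega⟩
    rw [zero_pow (by omega), smul_zero]

lemma pow_sub_pow_bdd {x y : Matrix (Fin d) (Fin d) ℚ_[2]} {c : ℝ}
    (hx : Bdd (4:ℝ)⁻¹ x) (hy : Bdd (4:ℝ)⁻¹ y) (hc : 0 ≤ c) (hxy : Bdd c (x - y)) :
    ∀ n : ℕ, Bdd (c * (4:ℝ)⁻¹ ^ n) (x ^ (n+1) - y ^ (n+1))
  | 0 => by simpa using hxy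
  | (n+1) => by
    have h1 : Bdd ((4:ℝ)⁻¹ * (c * (4:ℝ)⁻¹ ^ n)) (x * (x ^ (n+1) - y ^ (n+1))) :=
      hx.mul (by norm_num) (by positivity) (pow_sub_pow_bdd hx hy hc hxy n)
    have h2 : Bdd (c * (4:ℝ)⁻¹ ^ (n+1)) ((x - y) * y ^ (n+1)) :=
      hxy.mul hc (by positivity) (hy.pow (by norm_num) n)
    have hkey : x * (x ^ (n+1) - y ^ (n+1)) + (x - y) * y ^ (n+1)
        = x ^ (n+2) - y ^ (n+2) := by
      rw [mul_sub, sub_mul, ← pow_succ', ← pow_succ']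
      abel
    have := h1.add_max h2
    rw [hkey] at this
    refine this.mono ?_
    rw [show (4:ℝ)⁻¹ * (c * (4:ℝ)⁻¹ ^ n) = c * (4:ℝ)⁻¹ ^ (n+1) by ring, max_self]

lemma exp_sub_exp {x y : Matrix (Fin d) (Fin d) ℚ_[2]} {c : ℝ}
    (hx : Bdd (4:ℝ)⁻¹ x) (hy : Bdd (4:ℝ)⁻¹ y) (hc : 0 ≤ c) (hxy : Bdd c (x - y)) :
    Bdd (2⁻¹ * c) (dyadicMatExp x - dyadicMatExp y - (x - y)) := by
  intro i j
  have hsx : Summable (fun n : ℕ => (((Nat.factorial n : ℚ_[2]))⁻¹ • x ^ n) i j) :=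
    Pi.summable.mp (Pi.summable.mp (summable_term hx) i) j
  have hsy : Summable (fun n : ℕ => (((Nat.factorial n : ℚ_[2]))⁻¹ • y ^ n) i j) :=
    Pi.summable.mp (Pi.summable.mp (summable_term hy) i) j
  set f : ℕ → ℚ_[2] := fun n =>
    (((Nat.factorial n : ℚ_[2]))⁻¹ • x ^ n) i j - (((Nat.factorial n : ℚ_[2]))⁻¹ • y ^ n) i j
    with hf
  have hsf : Summable f := hsx.sub hsy
  have hentry : (dyadicMatExp x - dyadicMatExp y - (x - y)) i j
      = (∑' n, f n) - (x - y) i j := by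
    rw [Matrix.sub_apply, Matrix.sub_apply, exp_apply hx, exp_apply hy, ← Summable.tsum_sub hsx hsy]
  have hshift : (∑' n, f n) = f 0 + (f 1 + ∑' n, f (n + 2)) := by
    rw [Summable.tsum_eq_zero_add hsf, Summable.tsum_eq_zero_add ((summable_nat_add_iff 1).mpr hsf)]
  have hf0 : f 0 = 0 := by simp [hf, term_zero]
  have hf1 : f 1 = (x - y) i j := by simp [hf, term_one, Matrix.sub_apply]
  have hentry2 : (dyadicMatExp x - dyadicMatExp y - (x - y)) i j = ∑' n, f (n + 2) := by
    rw [hentry, hshift, hf0, hf1]; ring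
  rw [hentry2]
  apply IsUltrametricDist.norm_tsum_le_of_forall_le_of_nonneg (C := 2⁻¹ * c) (by positivity)
  intro n
  have hpow : Bdd (c * (4:ℝ)⁻¹ ^ (n+1)) (x ^ (n+2) - y ^ (n+2)) :=
    pow_sub_pow_bdd hx hy hc hxy (n+1)
  have hterm : Bdd (c * (2:ℝ)⁻¹ ^ (n+1))
      (((Nat.factorial (n+2) : ℚ_[2]))⁻¹ • (x ^ (n+2) - y ^ (n+2))) := by
    have h := Bdd.smul (norm_fact_inv_le (n+1)) hpow
    rwa [arith2] at h
  have hle : c * (2:ℝ)⁻¹ ^ (n+1) ≤ 2⁻¹ * c := by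
    rw [mul_comm ((2:ℝ))⁻¹ c]
    apply mul_le_mul_of_nonneg_left _ hc
    have h := pow_le_pow_of_le_one (a := (2:ℝ)⁻¹) (by norm_num) (by norm_num)
      (show 1 ≤ n + 1 by omega)
    simpa using h
  have : f (n + 2) = (((Nat.factorial (n+2) : ℚ_[2]))⁻¹ • (x ^ (n+2) - y ^ (n+2))) i j := by
    rw [hf, smul_sub, Matrix.sub_apply]
  rw [this]
  exact (hterm i j).trans hle

lemma exp_lip {x y : Matrix (Fin d) (Fin d) ℚ_[2]} {c : ℝ}
    (hx : Bdd (4:ℝ)⁻¹ x) (hy : Bdd (4:ℝ)⁻¹ y) (hc : 0 ≤ c) (hxy : Bdd c (x - y)) :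
    Bdd c (dyadicMatExp x - dyadicMatExp y) := by
  have hR := exp_sub_exp hx hy hc hxy
  have hsum := hR.add_max hxy
  have hkey : (dyadicMatExp x - dyadicMatExp y - (x - y)) + (x - y)
      = dyadicMatExp x - dyadicMatExp y := by abel
  rw [hkey] at hsum
  refine hsum.mono (max_le ?_ le_rfl)
  nlinarith

/-! ### Geometric series inverse -/

lemma neg_pow_bdd {u : Matrix (Fin d) (Fin d) ℚ_[2]} (hu : Bdd (4:ℝ)⁻¹ u) (n : ℕ) :
    Bdd ((4:ℝ)⁻¹ ^ n) ((-u) ^ n) := by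
  cases n with
  | zero => simpa using Bdd.one
  | succ n => exact Bdd.pow (by norm_num) hu.neg n

lemma geom_summable {u : Matrix (Fin d) (Fin d) ℚ_[2]} (hu : Bdd (4:ℝ)⁻¹ u) :
    Summable (fun n : ℕ => (-u) ^ n) :=
  Pi.summable.mpr fun i => Pi.summable.mpr fun j =>
    Summable.of_norm_bounded (g := fun n => (4:ℝ)⁻¹ ^ n)
      (summable_geometric_of_lt_one (by norm_num) (by norm_num))
      fun n => neg_pow_bdd hu n i j

lemma ring_left_inv {R : Type*} [Ring R] {S u : R} (hl : S = 1 + -(u * S)) :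
    (1 + u) * S = 1 := by
  have h : (1 + u) * S = S + u * S := by rw [add_mul, one_mul]
  rw [h]
  nth_rewrite 1 [hl]
  abel

lemma ring_right_inv {R : Type*} [Ring R] {S u : R} (hr : S = 1 + -(S * u)) :
    S * (1 + u) = 1 := by
  have h : S * (1 + u) = S + S * u := by rw [mul_add, mul_one]
  rw [h]
  nth_rewrite 1 [hr]
  abel

lemma geom_inv {u : Matrix (Fin d) (Fin d) ℚ_[2]} (hu : Bdd (4:ℝ)⁻¹ u) :
    (1 + u) * (∑' n : ℕ, (-u) ^ n) = 1 ∧ (∑' n : ℕ, (-u) ^ n) * (1 + u) = 1 ∧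
      Bdd 1 (∑' n : ℕ, (-u) ^ n) := by
  have hsum := geom_summable hu
  set S := ∑' n : ℕ, (-u) ^ n with hS
  have htail : S = 1 + ∑' n : ℕ, (-u) ^ (n + 1) := by
    rw [hS, Summable.tsum_eq_zero_add hsum, pow_zero]
  have hleft : HasSum (fun n : ℕ => (-u) ^ (n + 1)) (-(u * S)) := by
    have hc : Continuous (fun z : Matrix (Fin d) (Fin d) ℚ_[2] => u * z) :=
      continuous_const.mul continuous_id
    have h1 : HasSum (fun n : ℕ => u * (-u) ^ n) (u * S) :=
      hsum.hasSum.map (AddMonoidHom.mulLeft u) hc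
    have h2 : (fun n : ℕ => u * (-u) ^ n) = fun n : ℕ => -((-u) ^ (n + 1)) := by
      funext n; rw [pow_succ', neg_mul, neg_neg]
    rw [h2] at h1
    simpa using h1.neg
  have hright : HasSum (fun n : ℕ => (-u) ^ (n + 1)) (-(S * u)) := by
    have hc : Continuous (fun z : Matrix (Fin d) (Fin d) ℚ_[2] => z * u) :=
      continuous_id.mul continuous_const
    have h1 : HasSum (fun n : ℕ => (-u) ^ n * u) (S * u) :=
      hsum.hasSum.map (AddMonoidHom.mulRight u) hc
    have h2 : (fun n : ℕ => (-u) ^ n * u) = fun n : ℕ => -((-u) ^ (n + 1)) := by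
      funext n; rw [pow_succ, mul_neg, neg_neg]
    rw [h2] at h1
    simpa using h1.neg
  have hl : S = 1 + -(u * S) := by rw [← hleft.tsum_eq]; exact htail
  have hr : S = 1 + -(S * u) := by rw [← hright.tsum_eq]; exact htail
  refine ⟨ring_left_inv hl, ring_right_inv hr, ?_⟩
  · intro i j
    erw [hS, tsum_apply hsum, tsum_apply (Pi.summable.mp hsum i)]
    apply IsUltrametricDist.norm_tsum_le_of_forall_le_of_nonneg (C := 1) (by norm_num)
    intro n
    exact (neg_pow_bdd hu n i j).trans (pow_le_one₀ (by norm_num) (by norm_num))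

/-! ### The sup norm -/

lemma N_nonneg (x : Matrix (Fin d) (Fin d) ℚ_[2]) : 0 ≤ matDyadicNorm x :=
  Real.iSup_nonneg fun _ => Real.iSup_nonneg fun _ => norm_nonneg _

lemma N_le {x : Matrix (Fin d) (Fin d) ℚ_[2]} {c : ℝ} (hc : 0 ≤ c) (h : Bdd c x) :
    matDyadicNorm x ≤ c :=
  Real.iSup_le (fun i => Real.iSup_le (h i) hc) hc

lemma bdd_N (x : Matrix (Fin d) (Fin d) ℚ_[2]) : Bdd (matDyadicNorm x) x := by
  intro i j
  have h1 : ‖x i j‖ ≤ ⨆ j' : Fin d, ‖x i j'‖ :=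
    le_ciSup (f := fun j' : Fin d => ‖x i j'‖) (Set.Finite.bddAbove (Set.finite_range _)) j
  refine h1.trans ?_
  exact le_ciSup (f := fun i' : Fin d => ⨆ j' : Fin d, ‖x i' j'‖)
    (Set.Finite.bddAbove (Set.finite_range _)) i

lemma N_zero : matDyadicNorm (0 : Matrix (Fin d) (Fin d) ℚ_[2]) = 0 :=
  le_antisymm (N_le le_rfl (Bdd.zero le_rfl)) (N_nonneg 0)

lemma eq_of_N_eq_zero {x y : Matrix (Fin d) (Fin d) ℚ_[2]} (h : matDyadicNorm (x - y) = 0) :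
    x = y := by
  funext i j
  have := bdd_N (x - y) i j
  rw [h, Matrix.sub_apply] at this
  have := le_antisymm this (norm_nonneg _)
  rwa [norm_eq_zero, sub_eq_zero] at this

/-! ### Mapping properties of exp -/

lemma exp_sub_one_bdd {x : Matrix (Fin d) (Fin d) ℚ_[2]} (hx : Bdd (4:ℝ)⁻¹ x) :
    Bdd (4:ℝ)⁻¹ (dyadicMatExp x - 1) := by
  have h0 : Bdd (4:ℝ)⁻¹ (0 : Matrix (Fin d) (Fin d) ℚ_[2]) := Bdd.zero (by norm_num)
  have hx0 : Bdd (4:ℝ)⁻¹ (x - 0) := by simpa using hx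
  have hR := exp_sub_exp hx h0 (by norm_num) hx0
  have hkey : (dyadicMatExp x - dyadicMatExp 0 - (x - 0)) + x = dyadicMatExp x - 1 := by
    rw [exp_zero]; abel
  have h := hR.add_max hx
  rw [hkey] at h
  exact h.mono (max_le (by norm_num) le_rfl)

lemma exp_bdd_one {x : Matrix (Fin d) (Fin d) ℚ_[2]} (hx : Bdd (4:ℝ)⁻¹ x) :
    Bdd 1 (dyadicMatExp x) := by
  have h := (exp_sub_one_bdd hx).add_max Bdd.one
  have hkey : (dyadicMatExp x - 1) + 1 = dyadicMatExp x := by abel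
  rw [hkey] at h
  exact h.mono (max_le (by norm_num) le_rfl)

lemma exp_unit {x : Matrix (Fin d) (Fin d) ℚ_[2]} (hx : Bdd (4:ℝ)⁻¹ x) :
    IsUnit (dyadicMatExp x) ∧ Bdd 1 (dyadicMatExp x)⁻¹ := by
  have hub : Bdd (4:ℝ)⁻¹ (dyadicMatExp x - 1) := exp_sub_one_bdd hx
  obtain ⟨h1, h2, h3⟩ := geom_inv hub
  have hgu : 1 + (dyadicMatExp x - 1) = dyadicMatExp x := by abel
  rw [hgu] at h1 h2
  refine ⟨⟨⟨dyadicMatExp x, _, h1, h2⟩, rfl⟩, ?_⟩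
  rw [Matrix.inv_eq_right_inv h1]
  exact h3

/-! ### Surjectivity -/

noncomputable def seq (g : Matrix (Fin d) (Fin d) ℚ_[2]) : ℕ → Matrix (Fin d) (Fin d) ℚ_[2]
  | 0 => 0
  | k+1 => seq g k + (g - dyadicMatExp (seq g k))

lemma seq_zero (g : Matrix (Fin d) (Fin d) ℚ_[2]) : seq g 0 = 0 := rfl

lemma seq_succ (g : Matrix (Fin d) (Fin d) ℚ_[2]) (k : ℕ) :
    seq g (k+1) = seq g k + (g - dyadicMatExp (seq g k)) := rfl

lemma seq_bdd {g : Matrix (Fin d) (Fin d) ℚ_[2]} (hg : Bdd (4:ℝ)⁻¹ (g - 1)) :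
    ∀ k, Bdd (4:ℝ)⁻¹ (seq g k) ∧ Bdd ((4:ℝ)⁻¹ * (2:ℝ)⁻¹ ^ k) (g - dyadicMatExp (seq g k))
  | 0 => by
    refine ⟨by rw [seq_zero]; exact Bdd.zero (by norm_num), ?_⟩
    rw [seq_zero, exp_zero, pow_zero, mul_one]
    exact hg
  | k+1 => by
    obtain ⟨hs, hh⟩ := seq_bdd hg k
    have hpk : (4:ℝ)⁻¹ * (2:ℝ)⁻¹ ^ k ≤ (4:ℝ)⁻¹ := by
      have : (2:ℝ)⁻¹ ^ k ≤ 1 := pow_le_one₀ (by norm_num) (by norm_num)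
      nlinarith
    have hsk1 : Bdd (4:ℝ)⁻¹ (seq g (k+1)) := by
      rw [seq_succ]
      exact (hs.add_max hh).mono (max_le le_rfl hpk)
    have hxy : Bdd ((4:ℝ)⁻¹ * (2:ℝ)⁻¹ ^ k) (seq g (k+1) - seq g k) := by
      rw [seq_succ, add_sub_cancel_left]
      exact hh
    have hR := exp_sub_exp hsk1 hs (by positivity) hxy
    have h1 : seq g (k+1) - seq g k = g - dyadicMatExp (seq g k) := by
      rw [seq_succ, add_sub_cancel_left]
    have hkey : g - dyadicMatExp (seq g (k+1)) =
        -(dyadicMatExp (seq g (k+1)) - dyadicMatExp (seq g k) - (seq g (k+1) - seq g k)) := by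
      rw [h1]; abel
    refine ⟨hsk1, ?_⟩
    rw [hkey]
    exact hR.neg.mono (le_of_eq (by ring))

lemma seq_summable {g : Matrix (Fin d) (Fin d) ℚ_[2]} (hg : Bdd (4:ℝ)⁻¹ (g - 1)) :
    Summable (fun k : ℕ => g - dyadicMatExp (seq g k)) :=
  Pi.summable.mpr fun i => Pi.summable.mpr fun j =>
    Summable.of_norm_bounded (g := fun k => (4:ℝ)⁻¹ * (2:ℝ)⁻¹ ^ k)
      ((summable_geometric_of_lt_one (by norm_num) (by norm_num)).mul_left _)
      fun k => (seq_bdd hg k).2 i j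

lemma seq_eq_sum (g : Matrix (Fin d) (Fin d) ℚ_[2]) :
    ∀ k, seq g k = ∑ m ∈ Finset.range k, (g - dyadicMatExp (seq g m))
  | 0 => by rw [seq_zero, Finset.sum_range_zero]
  | k+1 => by rw [seq_succ, seq_eq_sum g k, Finset.sum_range_succ, ← seq_eq_sum g k]

lemma tail_pow_le (k m : ℕ) : (4:ℝ)⁻¹ * (2:ℝ)⁻¹ ^ (m + k) ≤ (4:ℝ)⁻¹ * (2:ℝ)⁻¹ ^ k := by
  apply mul_le_mul_of_nonneg_left _ (by norm_num)
  exact pow_le_pow_of_le_one (by norm_num) (by norm_num) (by omega)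

lemma exp_surj {g : Matrix (Fin d) (Fin d) ℚ_[2]} (hg : Bdd (4:ℝ)⁻¹ (g - 1)) :
    ∃ x, Bdd (4:ℝ)⁻¹ x ∧ dyadicMatExp x = g := by
  have hsum : Summable (fun k : ℕ => g - dyadicMatExp (seq g k)) := seq_summable hg
  set L := ∑' k : ℕ, (g - dyadicMatExp (seq g k)) with hL
  have hLb : Bdd (4:ℝ)⁻¹ L := by
    intro i j
    erw [hL, tsum_apply hsum, tsum_apply (Pi.summable.mp hsum i)]
    apply IsUltrametricDist.norm_tsum_le_of_forall_le_of_nonneg (C := (4:ℝ)⁻¹) (by norm_num)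
    intro k
    refine ((seq_bdd hg k).2 i j).trans ?_
    simpa using tail_pow_le 0 k
  refine ⟨L, hLb, ?_⟩
  have htail : ∀ k, Bdd ((4:ℝ)⁻¹ * (2:ℝ)⁻¹ ^ k) (L - seq g k) := by
    intro k
    have hs : Summable (fun m : ℕ => g - dyadicMatExp (seq g (m + k))) := by
      refine Pi.summable.mpr fun i => Pi.summable.mpr fun j => ?_
      exact (summable_nat_add_iff k).mpr (Pi.summable.mp (Pi.summable.mp hsum i) j)
    have hadd := Summable.sum_add_tsum_nat_add (f := fun k : ℕ => g - dyadicMatExp (seq g k)) k hsum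
    have heq : L - seq g k = ∑' m : ℕ, (g - dyadicMatExp (seq g (m + k))) := by
      rw [seq_eq_sum g k, hL]
      rw [sub_eq_iff_eq_add']
      exact hadd.symm
    intro i j
    erw [heq, tsum_apply hs, tsum_apply (Pi.summable.mp hs i)]
    apply IsUltrametricDist.norm_tsum_le_of_forall_le_of_nonneg
      (C := (4:ℝ)⁻¹ * (2:ℝ)⁻¹ ^ k) (by positivity)
    intro m
    exact ((seq_bdd hg (m + k)).2 i j).trans (tail_pow_le k m)
  have hdiff : ∀ k, Bdd ((4:ℝ)⁻¹ * (2:ℝ)⁻¹ ^ k) (dyadicMatExp L - g) := by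
    intro k
    have h1 : Bdd ((4:ℝ)⁻¹ * (2:ℝ)⁻¹ ^ k) (dyadicMatExp L - dyadicMatExp (seq g k)) :=
      exp_lip hLb (seq_bdd hg k).1 (by positivity) (htail k)
    have h2 := (seq_bdd hg k).2
    have hkey : (dyadicMatExp L - dyadicMatExp (seq g k)) - (g - dyadicMatExp (seq g k))
        = dyadicMatExp L - g := by abel
    have h := h1.sub_max h2
    rw [hkey] at h
    exact h.mono (max_self _).le
  funext i j
  have htend : Filter.Tendsto (fun k : ℕ => (4:ℝ)⁻¹ * (2:ℝ)⁻¹ ^ k) Filter.atTop (nhds 0) := by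
    have := (tendsto_pow_atTop_nhds_zero_of_lt_one
      (by norm_num : (0:ℝ) ≤ 2⁻¹) (by norm_num : (2:ℝ)⁻¹ < 1)).const_mul (4:ℝ)⁻¹
    simpa using this
  have hle0 : ‖(dyadicMatExp L - g) i j‖ ≤ 0 :=
    ge_of_tendsto' htend (fun k => hdiff k i j)
  have hz : (dyadicMatExp L - g) i j = 0 := by
    rw [← norm_eq_zero]
    exact le_antisymm hle0 (norm_nonneg _)
  rw [Matrix.sub_apply, sub_eq_zero] at hz
  exact hz

/-! ### Isometry -/

lemma exp_isometry {x y : Matrix (Fin d) (Fin d) ℚ_[2]}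
    (hx : Bdd (4:ℝ)⁻¹ x) (hy : Bdd (4:ℝ)⁻¹ y) :
    matDyadicNorm (dyadicMatExp x - dyadicMatExp y) = matDyadicNorm (x - y) := by
  have hc0 : 0 ≤ matDyadicNorm (x - y) := N_nonneg _
  have hxy : Bdd (matDyadicNorm (x - y)) (x - y) := bdd_N _
  have hR := exp_sub_exp hx hy hc0 hxy
  have hle : matDyadicNorm (dyadicMatExp x - dyadicMatExp y) ≤ matDyadicNorm (x - y) := by
    have h := hR.add_max hxy
    have hkey : (dyadicMatExp x - dyadicMatExp y - (x - y)) + (x - y)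
        = dyadicMatExp x - dyadicMatExp y := by abel
    rw [hkey] at h
    exact N_le hc0 (h.mono (max_le (by nlinarith) le_rfl))
  have h2 : Bdd (max (matDyadicNorm (dyadicMatExp x - dyadicMatExp y))
      (2⁻¹ * matDyadicNorm (x - y))) (x - y) := by
    have h := (bdd_N (dyadicMatExp x - dyadicMatExp y)).sub_max hR
    have hkey : (dyadicMatExp x - dyadicMatExp y) - (dyadicMatExp x - dyadicMatExp y - (x - y))
        = x - y := by abel
    rw [hkey] at h
    exact h
  have hge : matDyadicNorm (x - y) ≤ max (matDyadicNorm (dyadicMatExp x - dyadicMatExp y))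
      (2⁻¹ * matDyadicNorm (x - y)) :=
    N_le (le_max_of_le_left (N_nonneg _)) h2
  rcases le_max_iff.mp hge with h | h
  · exact le_antisymm hle h
  · have hc00 : matDyadicNorm (x - y) = 0 := by linarith
    have h0 : matDyadicNorm (dyadicMatExp x - dyadicMatExp y) = 0 :=
      le_antisymm (hc00 ▸ hle) (N_nonneg _)
    rw [h0, hc00]

end DyadicAux

/-- For `p = 2`, the exponential series converges on `4·M_d(ℤ_2)` and defines an isometric
bijection from `4·M_d(ℤ_2)` onto `ker(GL_d(ℤ_2) → GL_d(ℤ/4ℤ))` (matrices over `ℤ_2` that are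
invertible and congruent to `1` mod `4`). -/
theorem dyadic_exp_isometric_bijection (d : ℕ) :
    (∀ x ∈ {x : Matrix (Fin d) (Fin d) ℚ_[2] | ∀ i j, ‖x i j‖ ≤ (4 : ℝ)⁻¹},
        Summable (fun n : ℕ => ((Nat.factorial n : ℚ_[2]))⁻¹ • x ^ n)) ∧
    Set.BijOn dyadicMatExp
      {x : Matrix (Fin d) (Fin d) ℚ_[2] | ∀ i j, ‖x i j‖ ≤ (4 : ℝ)⁻¹}
      {g : Matrix (Fin d) (Fin d) ℚ_[2] |
        IsUnit g ∧ (∀ i j, ‖g i j‖ ≤ 1) ∧ (∀ i j, ‖(g - 1) i j‖ ≤ (4 : ℝ)⁻¹) ∧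
        ∀ i j, ‖g⁻¹ i j‖ ≤ 1} ∧
    (∀ x ∈ {x : Matrix (Fin d) (Fin d) ℚ_[2] | ∀ i j, ‖x i j‖ ≤ (4 : ℝ)⁻¹},
      ∀ y ∈ {x : Matrix (Fin d) (Fin d) ℚ_[2] | ∀ i j, ‖x i j‖ ≤ (4 : ℝ)⁻¹},
        matDyadicNorm (dyadicMatExp x - dyadicMatExp y) = matDyadicNorm (x - y)) := by
  refine ⟨fun x hx => DyadicAux.summable_term hx, ⟨?_, ?_, ?_⟩,
    fun x hx y hy => DyadicAux.exp_isometry hx hy⟩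
  · intro x hx
    have hx' : DyadicAux.Bdd (4:ℝ)⁻¹ x := hx
    obtain ⟨hu, hinv⟩ := DyadicAux.exp_unit hx'
    exact ⟨hu, DyadicAux.exp_bdd_one hx', DyadicAux.exp_sub_one_bdd hx', hinv⟩
  · intro x hx y hy hexp
    have h := DyadicAux.exp_isometry (x := x) (y := y) hx hy
    rw [hexp, sub_self, DyadicAux.N_zero] at h
    exact DyadicAux.eq_of_N_eq_zero h.symm
  · intro g hg
    obtain ⟨hu, h1, h2, h3⟩ := hg
    obtain ⟨x, hxb, hxg⟩ := DyadicAux.exp_surj h2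
    exact ⟨x, hxb, hxg⟩
end

section
/- Let h be a pro-p Z_p-Lie algebra (a closed Z_p-submodule of p·M_d(Z_p) closed under bracket), h' ⊂ h a subalgebra, ψ : h' → S¹ a continuous character, and define stab_h(ψ) = { x ∈ h : ψ([x,y]) = 1 for all y ∈ h' }, an open subgroup of h. If stab_h(ψ^p) = stab_h(ψ), then stab_h(ψ) = h. -/
open Real Complex

lemma aux_circle (w : ℂ) (hw : ‖w‖ = 1) (hk : ∀ k : ℕ, ‖w ^ k - 1‖ < 1) : w = 1 := by
  have habs : ‖w‖ = 1 := hw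
  obtain ⟨θ, hθ1, hθ2, hθ3⟩ : ∃ θ : ℝ, w = Complex.exp (θ * Complex.I) ∧ -π < θ ∧ θ ≤ π := by
    refine ⟨w.arg, ?_, neg_pi_lt_arg w, arg_le_pi w⟩
    conv_lhs => rw [← Complex.norm_mul_exp_arg_mul_I w]
    rw [habs]; simp
  have hcos : ∀ k : ℕ, 1 / 2 < Real.cos (k * θ) := by
    intro k
    have h1 : w ^ k = Complex.exp (((k : ℝ) * θ : ℝ) * Complex.I) := by
      rw [hθ1, ← Complex.exp_nat_mul]
      congr 1; push_cast; ring
    have h2 : ‖w ^ k - 1‖ ^ 2 = 2 - 2 * Real.cos (k * θ) := by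
      rw [h1, Complex.sq_norm, Complex.normSq_apply]
      simp only [Complex.sub_re, Complex.sub_im, Complex.one_re, Complex.one_im,
        Complex.exp_ofReal_mul_I_re, Complex.exp_ofReal_mul_I_im, sub_zero]
      nlinarith [Real.sin_sq_add_cos_sq ((k : ℝ) * θ)]
    have h3 := hk k
    nlinarith [norm_nonneg (w ^ k - 1)]
  set t := |θ| with ht
  have hcos' : ∀ k : ℕ, 1 / 2 < Real.cos (k * t) := by
    intro k
    rcases abs_cases θ with ⟨h1, _⟩ | ⟨h1, _⟩
    · rw [ht, h1]; exact hcos k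
    · rw [ht, h1, mul_neg, Real.cos_neg]; exact hcos k
  have ht0 : 0 ≤ t := abs_nonneg _
  have htpi : t ≤ π := abs_le.mpr ⟨hθ2.le, hθ3⟩
  have htsmall : t < π / 3 := by
    by_contra hcon
    push_neg at hcon
    have h5 := Real.cos_le_cos_of_nonneg_of_le_pi (by positivity) htpi hcon
    have h1 := hcos' 1
    rw [Real.cos_pi_div_three] at h5
    simp at h1
    linarith
  have ht0' : t = 0 := by
    by_contra hcon
    have htpos : 0 < t := lt_of_le_of_ne ht0 (Ne.symm hcon)
    have hex : ∃ k : ℕ, π / 3 ≤ k * t := by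
      obtain ⟨k, hk⟩ := Archimedean.arch (π / 3) htpos
      exact ⟨k, by simpa [nsmul_eq_mul] using hk⟩
    classical
    set k := Nat.find hex with hkdef
    have hk1 : π / 3 ≤ k * t := Nat.find_spec hex
    have hkpos : k ≠ 0 := by
      intro h0
      rw [h0] at hk1
      simp at hk1
      nlinarith [pi_pos]
    have hk2 : ¬ π / 3 ≤ (↑(k - 1) : ℝ) * t :=
      Nat.find_min hex (Nat.sub_lt (Nat.pos_of_ne_zero hkpos) one_pos)
    push_neg at hk2
    have hcast : ((k - 1 : ℕ) : ℝ) = (k : ℝ) - 1 := by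
      rw [Nat.cast_sub (Nat.one_le_iff_ne_zero.mpr hkpos)]; simp
    rw [hcast] at hk2
    have hup : (k : ℝ) * t < 2 * π / 3 := by nlinarith
    have h5 := Real.cos_le_cos_of_nonneg_of_le_pi (by positivity)
      (by nlinarith [pi_pos]) hk1
    rw [Real.cos_pi_div_three] at h5
    have := hcos' k
    linarith
  have : θ = 0 := abs_eq_zero.mp ht0'
  rw [hθ1, this]; simp

lemma aux_nhds (d p : ℕ) [Fact p.Prime] (U : Set (Matrix (Fin d) (Fin d) ℚ_[p]))
    (hU : U ∈ nhds (0 : Matrix (Fin d) (Fin d) ℚ_[p])) :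
    ∃ δ > 0, ∀ x : Matrix (Fin d) (Fin d) ℚ_[p], (∀ i j, ‖x i j‖ < δ) → x ∈ U := by
  have hU' : U ∈ nhds (0 : (Fin d) → (Fin d) → ℚ_[p]) := hU
  replace hU' := Metric.mem_nhds_iff.mp hU'
  obtain ⟨δ, hδ, hball⟩ := hU'
  refine ⟨δ, hδ, fun (x : Fin d → Fin d → ℚ_[p]) hx => hball ?_⟩
  rw [Metric.mem_ball, dist_pi_lt_iff hδ]
  intro i
  rw [dist_pi_lt_iff hδ]
  intro j
  simpa [dist_eq_norm] using hx i j


/-- The stabilizer `stab_h(ψ) = { x ∈ h : ψ([x,y]) = 1 for all y ∈ h' }` of a character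
`ψ` of `h'` under the (co)adjoint action of `h`. -/
def charStabilizer {d p : ℕ} [Fact p.Prime]
    (h h' : Set (Matrix (Fin d) (Fin d) ℚ_[p]))
    (ψ : Matrix (Fin d) (Fin d) ℚ_[p] → ℂ) : Set (Matrix (Fin d) (Fin d) ℚ_[p]) :=
  {x ∈ h | ∀ y ∈ h', ψ (x * y - y * x) = 1}

/-- Let `h` be a pro-`p` `ℤ_p`-Lie algebra (a closed `ℤ_p`-submodule of `p·M_d(ℤ_p)` closed
under bracket), `h' ⊆ h` a subalgebra with `[h, h'] ⊆ h'`, and `ψ : h' → S¹` a continuous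
character.  If `stab_h(ψ^p) = stab_h(ψ)`, then `stab_h(ψ) = h`. -/
theorem charStabilizer_eq_of_stab_pow_eq (d p : ℕ) [Fact p.Prime]
    (h h' : Set (Matrix (Fin d) (Fin d) ℚ_[p])) (hsub : h' ⊆ h)
    (hball : ∀ m ∈ h, ∀ i j, ‖m i j‖ ≤ ((p : ℝ))⁻¹)
    (hadd : ∀ m ∈ h, ∀ m' ∈ h, m + m' ∈ h)
    (hsmul : ∀ c : ℚ_[p], ‖c‖ ≤ 1 → ∀ m ∈ h, c • m ∈ h)
    (hbracket : ∀ m ∈ h, ∀ m' ∈ h, m * m' - m' * m ∈ h)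
    (hclosed : IsClosed h)
    (hadd' : ∀ m ∈ h', ∀ m' ∈ h', m + m' ∈ h')
    (hsmul' : ∀ c : ℚ_[p], ‖c‖ ≤ 1 → ∀ m ∈ h', c • m ∈ h')
    (hideal : ∀ x ∈ h, ∀ y ∈ h', x * y - y * x ∈ h')
    (hclosed' : IsClosed h')
    (ψ : Matrix (Fin d) (Fin d) ℚ_[p] → ℂ)
    (hψcirc : ∀ y ∈ h', ‖ψ y‖ = 1)
    (hψhom : ∀ a ∈ h', ∀ b ∈ h', ψ (a + b) = ψ a * ψ b)
    (hψcont : ContinuousOn ψ h')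
    (hstab : charStabilizer h h' (fun y => ψ y ^ p) = charStabilizer h h' ψ) :
    charStabilizer h h' ψ = h := by
  classical
  have hp2 : 2 ≤ p := (Fact.out : p.Prime).two_le
  have hp0 : (0:ℝ) < p := by positivity
  have hpinv1 : ((p:ℝ))⁻¹ < 1 := by
    rw [inv_lt_one_iff₀]; right; exact_mod_cast Nat.lt_of_lt_of_le one_lt_two hp2
  have hnormnat : ∀ n : ℕ, ‖(n : ℚ_[p])‖ ≤ 1 := by
    intro n
    have := Padic.norm_int_le_one (p := p) (n : ℤ)
    simpa using this
  refine Set.Subset.antisymm (fun x hx => hx.1) ?_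
  by_cases hne : ∃ z, z ∈ h'
  swap
  · intro x hx
    exact ⟨hx, fun y hy => absurd ⟨y, hy⟩ hne⟩
  obtain ⟨z0, hz0⟩ := hne
  have h0' : (0 : Matrix (Fin d) (Fin d) ℚ_[p]) ∈ h' := by
    have := hsmul' 0 (by simp) z0 hz0
    simpa using this
  have hψ0 : ψ 0 = 1 := by
    have hne0 : ψ 0 ≠ 0 := by
      intro h0
      have := hψcirc 0 h0'
      rw [h0] at this; simp at this
    have h := hψhom 0 h0' 0 h0'
    rw [add_zero] at h
    have : ψ 0 * 1 = ψ 0 * ψ 0 := by rw [mul_one]; exact h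
    exact (mul_left_cancel₀ hne0 this).symm
  have hpow : ∀ z ∈ h', ∀ k : ℕ, ψ ((k : ℚ_[p]) • z) = ψ z ^ k := by
    intro z hz k
    induction k with
    | zero => simpa using hψ0
    | succ n ih =>
      have hnz : ((n : ℚ_[p])) • z ∈ h' := hsmul' _ (hnormnat n) z hz
      have hcast : ((n + 1 : ℕ) : ℚ_[p]) • z = (n : ℚ_[p]) • z + z := by
        push_cast
        rw [add_smul, one_smul]
      rw [hcast, hψhom _ hnz _ hz, ih, pow_succ]
  -- uniform smallness: ψ is 1 on small elements of h'
  obtain ⟨n0, hsmall⟩ : ∃ n : ℕ, ∀ z ∈ h',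
      (∀ i j, ‖z i j‖ ≤ ((p:ℝ))⁻¹ ^ (n + 1)) → ψ z = 1 := by
    have hc : Filter.Tendsto ψ (nhdsWithin 0 h') (nhds (ψ 0)) := hψcont 0 h0'
    have hb : Metric.ball (1 : ℂ) 1 ∈ nhds (ψ 0) := by
      rw [hψ0]
      exact Metric.ball_mem_nhds 1 one_pos
    have hpre := hc hb
    rw [Filter.mem_map, mem_nhdsWithin] at hpre
    obtain ⟨U, hUopen, hU0, hUsub⟩ := hpre
    obtain ⟨δ, hδ, hUball⟩ := aux_nhds d p U (hUopen.mem_nhds hU0)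
    obtain ⟨n, hn⟩ : ∃ n : ℕ, ((p:ℝ))⁻¹ ^ (n + 1) < δ := by
      obtain ⟨n, hn⟩ := exists_pow_lt_of_lt_one hδ hpinv1
      exact ⟨n, by
        calc ((p:ℝ))⁻¹ ^ (n + 1) ≤ ((p:ℝ))⁻¹ ^ n := by
              apply pow_le_pow_of_le_one (by positivity) hpinv1.le (Nat.le_succ n)
          _ < δ := hn⟩
    refine ⟨n, fun z hz hznorm => ?_⟩
    apply aux_circle _ (hψcirc z hz)
    intro k
    have hkz : ((k : ℚ_[p])) • z ∈ h' := hsmul' _ (hnormnat k) z hz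
    have hkznorm : ∀ i j, ‖(((k : ℚ_[p])) • z) i j‖ < δ := by
      intro i j
      rw [Matrix.smul_apply, smul_eq_mul, norm_mul]
      calc ‖(k : ℚ_[p])‖ * ‖z i j‖ ≤ 1 * ‖z i j‖ := by
            apply mul_le_mul_of_nonneg_right (hnormnat k) (norm_nonneg _)
        _ = ‖z i j‖ := one_mul _
        _ ≤ ((p:ℝ))⁻¹ ^ (n + 1) := hznorm i j
        _ < δ := hn
    have hmem : ((k : ℚ_[p])) • z ∈ U := hUball _ hkznorm
    have := hUsub ⟨hmem, hkz⟩
    rw [Set.mem_preimage, Metric.mem_ball, dist_eq_norm] at this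
    rw [← hpow z hz k]
    exact this
  -- key step: division by p
  have hstep : ∀ x ∈ h, ((p : ℚ_[p]) • x ∈ charStabilizer h h' ψ) →
      x ∈ charStabilizer h h' ψ := by
    intro x hx hpx
    rw [← hstab]
    refine ⟨hx, fun y hy => ?_⟩
    have hb : x * y - y * x ∈ h' := hideal x hx y hy
    have h2 : ((p : ℚ_[p]) • x) * y - y * ((p : ℚ_[p]) • x)
        = (p : ℚ_[p]) • (x * y - y * x) := by
      rw [smul_mul_assoc, mul_smul_comm, smul_sub]
    show ψ (x * y - y * x) ^ p = 1
    rw [← hpow _ hb p, ← h2]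
    exact hpx.2 y hy
  -- iterate
  have hiter : ∀ n : ℕ, ∀ x ∈ h, ((p : ℚ_[p]) ^ n • x ∈ charStabilizer h h' ψ) →
      x ∈ charStabilizer h h' ψ := by
    intro n
    induction n with
    | zero => intro x _ hx0; simpa using hx0
    | succ m ih =>
      intro x hx hxm
      have hpx : (p : ℚ_[p]) • x ∈ h := by
        apply hsmul _ _ x hx
        rw [Padic.norm_p]
        exact inv_le_one_of_one_le₀ (by exact_mod_cast Nat.one_le_of_lt hp2)
      apply hstep x hx
      apply ih _ hpx
      rw [← mul_smul, ← pow_succ]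
      exact hxm
  -- conclude
  intro x hx
  apply hiter n0 x hx
  have hpn : ‖(p : ℚ_[p]) ^ n0‖ ≤ 1 := by
    rw [norm_pow, Padic.norm_p]
    apply pow_le_one₀ (by positivity)
    exact inv_le_one_of_one_le₀ (by exact_mod_cast Nat.one_le_of_lt hp2)
  refine ⟨hsmul _ hpn x hx, fun y hy => ?_⟩
  have hbr : x * y - y * x ∈ h := hbracket x hx y (hsub hy)
  have hbr' : x * y - y * x ∈ h' := hideal x hx y hy
  have h2 : ((p : ℚ_[p]) ^ n0 • x) * y - y * ((p : ℚ_[p]) ^ n0 • x)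
      = (p : ℚ_[p]) ^ n0 • (x * y - y * x) := by
    rw [smul_mul_assoc, mul_smul_comm, smul_sub]
  rw [h2]
  apply hsmall _ (hsmul' _ hpn _ hbr')
  intro i j
  rw [Matrix.smul_apply, smul_eq_mul, norm_mul, norm_pow, Padic.norm_p, pow_succ]
  apply mul_le_mul (le_refl _) (hball _ hbr i j) (norm_nonneg _) (by positivity)
end

section
/- Let G be a finite group and U ≤ G a cyclic subgroup of prime order p generated by u. Suppose a ∈ G normalizes U and a u a⁻¹ = u^{t²} where t generates (Z/pZ)^×. Let (ρ, V) be a complex representation of G in which some nontrivial character of U appears in the restriction of ρ to U. Then dim V ≥ (p−1)/2. -/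
private lemma pow_apply_of_eq_smul {V : Type*} [AddCommGroup V] [Module ℂ V]
    (f : V →ₗ[ℂ] V) (c : ℂ) (w : V) (h : f w = c • w) (m : ℕ) :
    (f ^ m) w = c ^ m • w := by
  induction m with
  | zero => simp
  | succ m ih =>
    rw [pow_succ', Module.End.mul_apply, ih, map_smul, h, smul_smul, ← pow_succ]

/-- Let `G` be a finite group, `u ∈ G` of prime order `p`, and `a ∈ G` with
`a u a⁻¹ = u^(t²)` where `t` generates `(ℤ/pℤ)ˣ`.  If a complex representation `(ρ, V)`
of `G` contains a nontrivial character of `U = ⟨u⟩` in its restriction to `U`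
(i.e. `ρ(u)` has an eigenvalue `ζ ≠ 1` with `ζ^p = 1`), then `dim V ≥ (p−1)/2`. -/
theorem dim_ge_of_nontrivial_character (G : Type*) [Group G] [Finite G]
    (p : ℕ) (hp : p.Prime) (u : G) (hu : orderOf u = p)
    (t : (ZMod p)ˣ) (ht : ∀ z : (ZMod p)ˣ, z ∈ Subgroup.zpowers t)
    (a : G) (hconj : a * u * a⁻¹ = u ^ (((t ^ 2 : (ZMod p)ˣ) : ZMod p)).val)
    (V : Type*) [AddCommGroup V] [Module ℂ V] [FiniteDimensional ℂ V]
    (ρ : G →* (V →ₗ[ℂ] V))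
    (hχ : ∃ ζ : ℂ, ζ ^ p = 1 ∧ ζ ≠ 1 ∧ ∃ v : V, v ≠ 0 ∧ ρ u v = ζ • v) :
    ((p : ℝ) - 1) / 2 ≤ (Module.finrank ℂ V : ℝ) := by
  obtain ⟨ζ, hζp, hζ1, v, hv0, hv⟩ := hχ
  haveI : Fact p.Prime := ⟨hp⟩
  haveI : NeZero p := ⟨hp.ne_zero⟩
  have hnt : Nontrivial V := ⟨v, 0, hv0⟩
  have hfr1 : 1 ≤ Module.finrank ℂ V := Module.finrank_pos
  by_cases hp2 : p = 2
  · subst hp2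
    have : (1 : ℝ) ≤ (Module.finrank ℂ V : ℝ) := by exact_mod_cast hfr1
    norm_num
    linarith
  -- p is an odd prime
  have hodd : Odd p := hp.odd_of_ne_two hp2
  have h2dvd : 2 ∣ p - 1 := (Nat.Odd.sub_odd hodd odd_one).two_dvd
  have hordζ : orderOf ζ = p := orderOf_eq_prime hζp hζ1
  have hzmod : ∀ n : ℕ, ζ ^ n = ζ ^ (n % p) := by
    intro n
    conv_lhs => rw [← Nat.div_add_mod n p]
    rw [pow_add, pow_mul, hζp, one_pow, one_mul]
  have hordt : orderOf t = p - 1 := by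
    rw [orderOf_eq_card_of_forall_mem_zpowers ht, Nat.card_eq_fintype_card, ZMod.card_units p]
  have hordt2 : orderOf (t ^ 2) = (p - 1) / 2 := by
    rw [orderOf_pow, hordt, Nat.gcd_comm, Nat.gcd_eq_left h2dvd]
  set m : ℕ := (((t ^ 2 : (ZMod p)ˣ) : ZMod p)).val with hm
  have hcomm : u * a⁻¹ = a⁻¹ * u ^ m := by
    rw [← hconj]; group
  -- the chain of eigenvectors
  have key : ∀ k : ℕ, ρ u (ρ (a⁻¹ ^ k) v)
      = (ζ ^ (((t ^ (2 * k) : (ZMod p)ˣ) : ZMod p)).val) • ρ (a⁻¹ ^ k) v := by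
    intro k
    induction k with
    | zero =>
      simpa [ZMod.val_one] using hv
    | succ k ih =>
      have hstep : ρ (a⁻¹ ^ (k + 1)) v = ρ a⁻¹ (ρ (a⁻¹ ^ k) v) := by
        rw [← Module.End.mul_apply, ← map_mul, ← pow_succ']
      rw [hstep, ← Module.End.mul_apply, ← map_mul, hcomm, map_mul,
        Module.End.mul_apply, map_pow,
        pow_apply_of_eq_smul _ _ _ ih m, map_smul]
      congr 1
      rw [← pow_mul, hzmod, ← ZMod.val_mul]
      congr 2
      push_cast [pow_add, mul_add]
      ring
  have hnz : ∀ k : ℕ, ρ (a⁻¹ ^ k) v ≠ 0 := by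
    intro k hzero
    apply hv0
    have : ρ (a ^ k) (ρ (a⁻¹ ^ k) v) = v := by
      rw [← Module.End.mul_apply, ← map_mul, inv_pow, mul_inv_cancel, map_one,
        Module.End.one_apply]
    rw [hzero, map_zero] at this
    exact this.symm
  set n : ℕ := (p - 1) / 2 with hn
  -- injectivity of the eigenvalues
  have hμinj : Function.Injective
      (fun k : Fin n => ζ ^ (((t ^ (2 * (k : ℕ)) : (ZMod p)ˣ) : ZMod p)).val) := by
    intro k j hkj
    simp only at hkj
    have hval : (((t ^ (2 * (k : ℕ)) : (ZMod p)ˣ) : ZMod p)).val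
        = (((t ^ (2 * (j : ℕ)) : (ZMod p)ˣ) : ZMod p)).val := by
      refine pow_injOn_Iio_orderOf ?_ ?_ hkj <;>
        simp [hordζ, ZMod.val_lt]
    have hzm : ((t ^ (2 * (k : ℕ)) : (ZMod p)ˣ) : ZMod p)
        = ((t ^ (2 * (j : ℕ)) : (ZMod p)ˣ) : ZMod p) := ZMod.val_injective p hval
    have hu2 : (t ^ 2) ^ (k : ℕ) = (t ^ 2) ^ (j : ℕ) := by
      rw [← pow_mul, ← pow_mul]
      exact Units.ext hzm
    have := pow_injOn_Iio_orderOf (x := t ^ 2)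
      (by simp [hordt2, k.isLt]) (by simp [hordt2, j.isLt]) hu2
    exact Fin.ext this
  -- linear independence
  have hli : LinearIndependent ℂ (fun k : Fin n => ρ (a⁻¹ ^ (k : ℕ)) v) := by
    apply Module.End.eigenvectors_linearIndependent' (ρ u : Module.End ℂ V) _ hμinj
    intro k
    exact ⟨Module.End.mem_eigenspace_iff.mpr (key k), hnz k⟩
  have hcard : n ≤ Module.finrank ℂ V := by
    simpa using hli.fintype_card_le_finrank
  have hcast : ((p : ℝ) - 1) / 2 = (n : ℝ) := by
    rw [hn, Nat.cast_div h2dvd (by norm_num), Nat.cast_sub hp.one_le]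
    norm_num
  rw [hcast]
  exact_mod_cast hcard
end

section
/- Let ν be a probability measure on the finite abelian group (Z/qZ)^D (where D ≥ 1) whose Fourier coefficients satisfy |ν̂(b)| ≤ (q/gcd(q,b))^{−D} for all b ∈ (Z/qZ)^D, where gcd(q,b) is the gcd of q and all coordinates of a lift of b. Then ‖ν‖₂² = q^{−D} ∑_b |ν̂(b)|² ≤ C·q^{−D} for a constant C depending only on D (in fact C = ∑_{r|q} r^{−D} ≤ ζ(D) ≤ 2 for D ≥ 2). -/
open Finset Complex

lemma sum_exp_zmod (q : ℕ) [NeZero q] (m : ℤ) :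
    ∑ c : ZMod q, Complex.exp (2 * Real.pi * Complex.I * (c.val : ℂ) * m / q)
      = if (q : ℤ) ∣ m then (q : ℂ) else 0 := by
  have hq0 : (q : ℂ) ≠ 0 := Nat.cast_ne_zero.mpr (NeZero.ne q)
  set z : ℂ := Complex.exp (2 * Real.pi * Complex.I * m / q) with hz
  have hterm : ∀ c : ZMod q,
      Complex.exp (2 * Real.pi * Complex.I * (c.val : ℂ) * m / q) = z ^ c.val := by
    intro c
    rw [hz, ← Complex.exp_nat_mul]
    congr 1
    ring
  have hsum : ∑ c : ZMod q, Complex.exp (2 * Real.pi * Complex.I * (c.val : ℂ) * m / q)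
      = ∑ j ∈ Finset.range q, z ^ j := by
    rw [Finset.sum_congr rfl fun c _ => hterm c]
    apply Finset.sum_nbij' (fun c : ZMod q => ZMod.val c) (fun j : ℕ => (j : ZMod q))
    · intro c _; exact Finset.mem_range.mpr (ZMod.val_lt c)
    · intro j _; exact Finset.mem_univ _
    · intro c _; exact ZMod.natCast_rightInverse c
    · intro j hj; exact ZMod.val_cast_of_lt (Finset.mem_range.mp hj)
    · intro c _; rfl
  rw [hsum]
  have hzq : z ^ q = 1 := by
    rw [hz, ← Complex.exp_nat_mul]
    have : (q : ℂ) * (2 * Real.pi * Complex.I * m / q) = m * (2 * Real.pi * Complex.I) := by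
      field_simp
    rw [this]
    exact_mod_cast Complex.exp_int_mul_two_pi_mul_I m
  by_cases hdvd : (q : ℤ) ∣ m
  · rw [if_pos hdvd]
    obtain ⟨n, hn⟩ := hdvd
    have hz1 : z = 1 := by
      rw [hz]
      have : 2 * Real.pi * Complex.I * m / q = n * (2 * Real.pi * Complex.I) := by
        rw [hn]; push_cast; field_simp
      rw [this]
      exact Complex.exp_int_mul_two_pi_mul_I n
    simp [hz1]
  · have hz1 : z ≠ 1 := by
      intro h
      rw [hz, Complex.exp_eq_one_iff] at h
      obtain ⟨n, hn⟩ := h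
      apply hdvd
      refine ⟨n, ?_⟩
      have h2 : (2 : ℂ) * Real.pi * Complex.I ≠ 0 := by
        simp [Real.pi_ne_zero, Complex.I_ne_zero]
      have h3 : (m : ℂ) = n * q := by
        field_simp at hn
        apply mul_left_cancel₀ h2
        linear_combination (2 * (Real.pi : ℂ) * Complex.I) * hn
      have h4 : m = n * q := by exact_mod_cast h3
      rw [h4, mul_comm]
    rw [if_neg hdvd, geom_sum_eq hz1, hzq]
    simp

/-- The Fourier coefficient `ν̂(b) = ∑_x ν(x) e^(2πi⟨b,x⟩/q)` of a function on `(ℤ/qℤ)^D`. -/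
noncomputable def fourierCoeffZModPow {q D : ℕ} [NeZero q]
    (ν : (Fin D → ZMod q) → ℝ) (b : Fin D → ZMod q) : ℂ :=
  ∑ x : Fin D → ZMod q, (ν x : ℂ) *
    Complex.exp (2 * Real.pi * Complex.I * ((∑ k : Fin D, (b k).val * (x k).val : ℕ) : ℂ) / q)

/-- `gcd(q, b)`: the gcd of `q` and all the coordinates of (a lift of) `b`. -/
def gcdZModVec {q D : ℕ} (b : Fin D → ZMod q) : ℕ :=
  Nat.gcd q (Finset.univ.gcd fun k : Fin D => (b k).val)

lemma sum_orth (q D : ℕ) [NeZero q] (x y : Fin D → ZMod q) :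
    ∑ b : Fin D → ZMod q,
      Complex.exp (2 * Real.pi * Complex.I * ((∑ k : Fin D, (b k).val * (x k).val : ℕ) : ℂ) / q) *
      (starRingEnd ℂ) (Complex.exp (2 * Real.pi * Complex.I *
        ((∑ k : Fin D, (b k).val * (y k).val : ℕ) : ℂ) / q))
      = if x = y then (q : ℂ) ^ D else 0 := by
  have hstep : ∀ b : Fin D → ZMod q,
      Complex.exp (2 * Real.pi * Complex.I * ((∑ k : Fin D, (b k).val * (x k).val : ℕ) : ℂ) / q) *
      (starRingEnd ℂ) (Complex.exp (2 * Real.pi * Complex.I *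
        ((∑ k : Fin D, (b k).val * (y k).val : ℕ) : ℂ) / q))
      = ∏ k : Fin D, Complex.exp (2 * Real.pi * Complex.I * ((b k).val : ℂ) *
          (((x k).val : ℤ) - ((y k).val : ℤ) : ℤ) / q) := by
    intro b
    rw [← Complex.exp_conj]
    rw [← Complex.exp_add, ← Complex.exp_sum]
    congr 1
    rw [map_div₀, map_mul]
    simp only [map_mul, map_sum, Complex.conj_I, Complex.conj_ofReal, map_ofNat, map_natCast]
    push_cast
    rw [Finset.mul_sum, Finset.mul_sum, Finset.sum_div, Finset.sum_div,
      ← Finset.sum_add_distrib]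
    exact Finset.sum_congr rfl fun k _ => by ring
  rw [Finset.sum_congr rfl fun b _ => hstep b]
  rw [← Fintype.piFinset_univ,
    Finset.sum_prod_piFinset (κ := ZMod q) Finset.univ
      (fun k c => Complex.exp (2 * Real.pi * Complex.I * (c.val : ℂ) *
        (((x k).val : ℤ) - ((y k).val : ℤ) : ℤ) / q))]
  have h1 : ∀ k : Fin D,
      (∑ c : ZMod q, Complex.exp (2 * Real.pi * Complex.I * (c.val : ℂ) *
        (((x k).val : ℤ) - ((y k).val : ℤ) : ℤ) / q)) = if x k = y k then (q : ℂ) else 0 := by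
    intro k
    rw [sum_exp_zmod q (((x k).val : ℤ) - ((y k).val : ℤ))]
    congr 1
    rw [eq_iff_iff, ← ZMod.intCast_zmod_eq_zero_iff_dvd]
    push_cast
    rw [ZMod.natCast_rightInverse, ZMod.natCast_rightInverse, sub_eq_zero]
  rw [Finset.prod_congr rfl fun k _ => h1 k]
  by_cases hxy : x = y
  · simp [hxy]
  · obtain ⟨k, hk⟩ : ∃ k, x k ≠ y k := by
      by_contra h; push_neg at h; exact hxy (funext h)
    rw [if_neg hxy]
    exact Finset.prod_eq_zero (Finset.mem_univ k) (if_neg hk)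

lemma parseval (q D : ℕ) [NeZero q] (ν : (Fin D → ZMod q) → ℝ) :
    (q : ℝ) ^ D * ∑ x : Fin D → ZMod q, ν x ^ 2
      = ∑ b : Fin D → ZMod q, ‖fourierCoeffZModPow ν b‖ ^ 2 := by
  set e : (Fin D → ZMod q) → (Fin D → ZMod q) → ℂ := fun b x =>
    Complex.exp (2 * Real.pi * Complex.I *
      ((∑ k : Fin D, (b k).val * (x k).val : ℕ) : ℂ) / q) with he
  have key : ∑ b : Fin D → ZMod q,
      fourierCoeffZModPow ν b * (starRingEnd ℂ) (fourierCoeffZModPow ν b)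
      = (q : ℂ) ^ D * ∑ x : Fin D → ZMod q, (ν x : ℂ) ^ 2 := by
    calc ∑ b : Fin D → ZMod q,
        fourierCoeffZModPow ν b * (starRingEnd ℂ) (fourierCoeffZModPow ν b)
        = ∑ b : Fin D → ZMod q, ∑ x : Fin D → ZMod q, ∑ y : Fin D → ZMod q,
            ((ν x : ℂ) * (ν y : ℂ)) * (e b x * (starRingEnd ℂ) (e b y)) := by
          refine Finset.sum_congr rfl fun b _ => ?_
          show (∑ x : Fin D → ZMod q, (ν x : ℂ) * e b x) *
            (starRingEnd ℂ) (∑ y : Fin D → ZMod q, (ν y : ℂ) * e b y) = _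
          rw [map_sum, Finset.sum_mul_sum]
          refine Finset.sum_congr rfl fun x _ => Finset.sum_congr rfl fun y _ => ?_
          rw [map_mul, Complex.conj_ofReal]; ring
      _ = ∑ x : Fin D → ZMod q, ∑ y : Fin D → ZMod q, ∑ b : Fin D → ZMod q,
            ((ν x : ℂ) * (ν y : ℂ)) * (e b x * (starRingEnd ℂ) (e b y)) := by
          rw [Finset.sum_comm]
          exact Finset.sum_congr rfl fun x _ => Finset.sum_comm
      _ = ∑ x : Fin D → ZMod q, ∑ y : Fin D → ZMod q,
            ((ν x : ℂ) * (ν y : ℂ)) * (if x = y then (q : ℂ) ^ D else 0) := by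
          refine Finset.sum_congr rfl fun x _ => Finset.sum_congr rfl fun y _ => ?_
          rw [← Finset.mul_sum, sum_orth q D x y]
      _ = ∑ x : Fin D → ZMod q, ((ν x : ℂ) * (ν x : ℂ)) * (q : ℂ) ^ D := by
          refine Finset.sum_congr rfl fun x _ => ?_
          simp [Finset.sum_ite_eq, mul_ite]
      _ = (q : ℂ) ^ D * ∑ x : Fin D → ZMod q, (ν x : ℂ) ^ 2 := by
          rw [Finset.mul_sum]
          exact Finset.sum_congr rfl fun x _ => by ring
  have h2 : ((∑ b : Fin D → ZMod q, ‖fourierCoeffZModPow ν b‖ ^ 2 : ℝ) : ℂ)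
      = (q : ℂ) ^ D * ∑ x : Fin D → ZMod q, (ν x : ℂ) ^ 2 := by
    push_cast
    rw [← key]
    exact Finset.sum_congr rfl fun b _ => by
      rw [← Complex.ofReal_pow, Complex.sq_norm, Complex.mul_conj]
  exact_mod_cast h2.symm

lemma gcdZModVec_dvd_q {q D : ℕ} (b : Fin D → ZMod q) : gcdZModVec b ∣ q :=
  Nat.gcd_dvd_left _ _

lemma gcdZModVec_dvd_val {q D : ℕ} (b : Fin D → ZMod q) (k : Fin D) :
    gcdZModVec b ∣ (b k).val :=
  (Nat.gcd_dvd_right _ _).trans (Finset.gcd_dvd (Finset.mem_univ k))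

lemma card_fiber_le (q D s : ℕ) [NeZero q] (hs : s ∣ q) (hs0 : 0 < s) :
    (Finset.univ.filter fun b : Fin D → ZMod q => gcdZModVec b = s).card ≤ (q / s) ^ D := by
  have hq0 : 0 < q := Nat.pos_of_ne_zero (NeZero.ne q)
  classical
  have := Finset.card_le_card_of_injOn
    (f := fun b : Fin D → ZMod q => fun k : Fin D => (b k).val / s)
    (s := Finset.univ.filter fun b : Fin D → ZMod q => gcdZModVec b = s)
    (t := (Finset.univ : Finset (Fin D → Fin (q / s))).image
      (fun f : Fin D → Fin (q / s) => fun k => (f k : ℕ)))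
    ?_ ?_
  · refine this.trans ?_
    refine (Finset.card_image_le).trans ?_
    simp [Finset.card_univ]
  · intro b hb
    simp only [Finset.mem_coe, Finset.mem_filter, Finset.mem_univ, true_and] at hb
    simp only [Finset.mem_coe, Finset.mem_image, Finset.mem_univ]
    exact ⟨fun k => ⟨(b k).val / s,
      Nat.div_lt_div_of_lt_of_dvd hs (ZMod.val_lt (b k))⟩, trivial, rfl⟩
  · intro b hb c hc h
    simp only [Finset.mem_coe, Finset.mem_filter, Finset.mem_univ, true_and] at hb hc
    funext k
    have hbk : s ∣ (b k).val := hb ▸ gcdZModVec_dvd_val b k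
    have hck : s ∣ (c k).val := hc ▸ gcdZModVec_dvd_val c k
    have hval : (b k).val = (c k).val := by
      have h1 : (b k).val / s = (c k).val / s := congrFun h k
      rw [← Nat.div_mul_cancel hbk, ← Nat.div_mul_cancel hck, h1]
    have := ZMod.natCast_rightInverse (n := q)
    calc b k = ((b k).val : ZMod q) := (this (b k)).symm
      _ = ((c k).val : ZMod q) := by rw [hval]
      _ = c k := this (c k)

lemma sum_inv_sq_le (n : ℕ) : ∑ r ∈ Finset.Icc 1 n, ((r : ℝ)) ^ (-2 : ℤ) ≤ 2 - 1 / n := by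
  induction n with
  | zero => simp
  | succ n ih =>
    rw [Finset.sum_Icc_succ_top (by omega : 1 ≤ n + 1)]
    rcases Nat.eq_zero_or_pos n with hn | hn
    · subst hn; norm_num
    · have h1 : ((n : ℝ)) > 0 := by exact_mod_cast hn
      have h2 : ((n : ℝ) + 1) > 0 := by positivity
      have key : ((n + 1 : ℕ) : ℝ) ^ (-2 : ℤ) ≤ 1 / n - 1 / (n + 1 : ℕ) := by
        push_cast
        have h3 : ((n : ℝ) + 1) ^ (-2 : ℤ) = 1 / (((n : ℝ) + 1) ^ 2) := by
          rw [zpow_neg]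
          norm_num
        rw [h3, div_sub_div _ _ (ne_of_gt h1) (ne_of_gt h2),
          div_le_div_iff₀ (by positivity) (by positivity)]
        nlinarith
      have := ih
      push_cast at key ⊢
      linarith

/-- If a probability measure `ν` on `(ℤ/qℤ)^D` has Fourier coefficients bounded by
`|ν̂(b)| ≤ (q/gcd(q,b))^(-D)`, then by Parseval
`‖ν‖₂² = q^(-D) ∑_b |ν̂(b)|² ≤ (∑_(r|q) r^(-D))·q^(-D)`, which is `≤ 2·q^(-D)` for `D ≥ 2`. -/
theorem l2_norm_sq_le_of_fourier_decay (q D : ℕ) [NeZero q] (hq : 1 ≤ q) (hD : 1 ≤ D)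
    (ν : (Fin D → ZMod q) → ℝ)
    (hpos : ∀ x, 0 ≤ ν x) (hsum : ∑ x : Fin D → ZMod q, ν x = 1)
    (hfourier : ∀ b : Fin D → ZMod q,
      ‖fourierCoeffZModPow ν b‖ ≤ ((q : ℝ) / (gcdZModVec b : ℝ)) ^ (-(D : ℤ))) :
    (∑ x : Fin D → ZMod q, ν x ^ 2
      = (q : ℝ) ^ (-(D : ℤ)) * ∑ b : Fin D → ZMod q, ‖fourierCoeffZModPow ν b‖ ^ 2) ∧
    (∑ x : Fin D → ZMod q, ν x ^ 2
      ≤ (∑ r ∈ q.divisors, (r : ℝ) ^ (-(D : ℤ))) * (q : ℝ) ^ (-(D : ℤ))) ∧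
    (2 ≤ D → ∑ x : Fin D → ZMod q, ν x ^ 2 ≤ 2 * (q : ℝ) ^ (-(D : ℤ))) := by
  classical
  have hq0 : (0 : ℝ) < q := by exact_mod_cast Nat.pos_of_ne_zero (NeZero.ne q)
  have hparse := parseval q D ν
  have part1 : ∑ x : Fin D → ZMod q, ν x ^ 2
      = (q : ℝ) ^ (-(D : ℤ)) * ∑ b : Fin D → ZMod q,
        ‖fourierCoeffZModPow ν b‖ ^ 2 := by
    rw [← hparse, zpow_neg, zpow_natCast]
    field_simp
  -- bound the Fourier sum
  have hSbound : ∑ b : Fin D → ZMod q, ‖fourierCoeffZModPow ν b‖ ^ 2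
      ≤ ∑ r ∈ q.divisors, (r : ℝ) ^ (-(D : ℤ)) := by
    have hgpos : ∀ b : Fin D → ZMod q, (0 : ℝ) < (q : ℝ) / (gcdZModVec b : ℝ) := by
      intro b
      have h1 : 0 < gcdZModVec b :=
        Nat.pos_of_dvd_of_pos (gcdZModVec_dvd_q b) (Nat.pos_of_ne_zero (NeZero.ne q))
      have : (0 : ℝ) < (gcdZModVec b : ℝ) := by exact_mod_cast h1
      positivity
    have step1 : ∑ b : Fin D → ZMod q, ‖fourierCoeffZModPow ν b‖ ^ 2
        ≤ ∑ b : Fin D → ZMod q, ((q : ℝ) / (gcdZModVec b : ℝ)) ^ (-(2 * D : ℤ)) := by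
      apply Finset.sum_le_sum
      intro b _
      calc ‖fourierCoeffZModPow ν b‖ ^ 2
          ≤ (((q : ℝ) / (gcdZModVec b : ℝ)) ^ (-(D : ℤ))) ^ 2 :=
            pow_le_pow_left₀ (norm_nonneg _) (hfourier b) 2
        _ = ((q : ℝ) / (gcdZModVec b : ℝ)) ^ (-(2 * D : ℤ)) := by
            rw [← zpow_natCast (((q : ℝ) / (gcdZModVec b : ℝ)) ^ (-(D : ℤ))) 2, ← zpow_mul]
            norm_num
            ring_nf
    have gmem : ∀ b : Fin D → ZMod q, gcdZModVec b ∈ q.divisors := fun b =>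
      Nat.mem_divisors.mpr ⟨gcdZModVec_dvd_q b, NeZero.ne q⟩
    have step2 : ∑ b : Fin D → ZMod q, ((q : ℝ) / (gcdZModVec b : ℝ)) ^ (-(2 * D : ℤ))
        = ∑ s ∈ q.divisors, ∑ b ∈ Finset.univ.filter
            (fun b : Fin D → ZMod q => gcdZModVec b = s),
            ((q : ℝ) / (s : ℝ)) ^ (-(2 * D : ℤ)) := by
      rw [← Finset.sum_fiberwise_of_maps_to (fun b _ => gmem b)
        (fun b => ((q : ℝ) / (gcdZModVec b : ℝ)) ^ (-(2 * D : ℤ)))]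
      refine Finset.sum_congr rfl fun s _ => Finset.sum_congr rfl fun b hb => ?_
      simp only [Finset.mem_filter] at hb
      rw [hb.2]
    have step3 : ∑ s ∈ q.divisors, ∑ b ∈ Finset.univ.filter
            (fun b : Fin D → ZMod q => gcdZModVec b = s),
            ((q : ℝ) / (s : ℝ)) ^ (-(2 * D : ℤ))
        ≤ ∑ s ∈ q.divisors, ((q : ℝ) / (s : ℝ)) ^ (-(D : ℤ)) := by
      apply Finset.sum_le_sum
      intro s hs
      obtain ⟨hsd, -⟩ := Nat.mem_divisors.mp hs
      have hs0 : 0 < s := Nat.pos_of_dvd_of_pos hsd (Nat.pos_of_ne_zero (NeZero.ne q))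
      have hsR : (0 : ℝ) < (s : ℝ) := by exact_mod_cast hs0
      have hxpos : (0 : ℝ) < (q : ℝ) / (s : ℝ) := by positivity
      rw [Finset.sum_const, nsmul_eq_mul]
      have hcast : (((q / s : ℕ) : ℝ)) = (q : ℝ) / (s : ℝ) :=
        Nat.cast_div hsd (ne_of_gt hsR)
      have hcard : ((Finset.univ.filter
          (fun b : Fin D → ZMod q => gcdZModVec b = s)).card : ℝ)
          ≤ ((q : ℝ) / (s : ℝ)) ^ (D : ℤ) := by
        rw [zpow_natCast, ← hcast]
        exact_mod_cast card_fiber_le q D s hsd hs0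
      calc ((Finset.univ.filter (fun b : Fin D → ZMod q => gcdZModVec b = s)).card : ℝ)
            * ((q : ℝ) / (s : ℝ)) ^ (-(2 * D : ℤ))
          ≤ ((q : ℝ) / (s : ℝ)) ^ (D : ℤ) * ((q : ℝ) / (s : ℝ)) ^ (-(2 * D : ℤ)) := by
            apply mul_le_mul_of_nonneg_right hcard (le_of_lt (zpow_pos hxpos _))
        _ = ((q : ℝ) / (s : ℝ)) ^ (-(D : ℤ)) := by
            rw [← zpow_add₀ (ne_of_gt hxpos)]
            congr 1
            ring
    have step4 : ∑ s ∈ q.divisors, ((q : ℝ) / (s : ℝ)) ^ (-(D : ℤ))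
        = ∑ r ∈ q.divisors, (r : ℝ) ^ (-(D : ℤ)) := by
      rw [← Nat.sum_div_divisors q (fun r => (r : ℝ) ^ (-(D : ℤ)))]
      refine Finset.sum_congr rfl fun s hs => ?_
      obtain ⟨hsd, -⟩ := Nat.mem_divisors.mp hs
      have hs0 : 0 < s := Nat.pos_of_dvd_of_pos hsd (Nat.pos_of_ne_zero (NeZero.ne q))
      rw [Nat.cast_div hsd (by exact_mod_cast ne_of_gt hs0 : ((s : ℝ)) ≠ 0)]
    calc ∑ b : Fin D → ZMod q, ‖fourierCoeffZModPow ν b‖ ^ 2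
        ≤ _ := step1
      _ = _ := step2
      _ ≤ _ := step3
      _ = _ := step4
  have hqD : (0 : ℝ) < (q : ℝ) ^ (-(D : ℤ)) := zpow_pos hq0 _
  refine ⟨part1, ?_, ?_⟩
  · rw [part1, mul_comm]
    exact mul_le_mul_of_nonneg_right hSbound (le_of_lt hqD)
  · intro hD2
    have hdiv2 : ∑ r ∈ q.divisors, (r : ℝ) ^ (-(D : ℤ)) ≤ 2 := by
      have t1 : ∑ r ∈ q.divisors, (r : ℝ) ^ (-(D : ℤ))
          ≤ ∑ r ∈ q.divisors, (r : ℝ) ^ (-2 : ℤ) := by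
        apply Finset.sum_le_sum
        intro r hr
        obtain ⟨hrd, -⟩ := Nat.mem_divisors.mp hr
        have hr1 : 1 ≤ r := Nat.pos_of_dvd_of_pos hrd (Nat.pos_of_ne_zero (NeZero.ne q))
        have : (1 : ℝ) ≤ (r : ℝ) := by exact_mod_cast hr1
        exact zpow_le_zpow_right₀ this (by omega)
      have t2 : ∑ r ∈ q.divisors, (r : ℝ) ^ (-2 : ℤ)
          ≤ ∑ r ∈ Finset.Icc 1 q, (r : ℝ) ^ (-2 : ℤ) := by
        apply Finset.sum_le_sum_of_subset_of_nonneg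
        · intro r hr
          obtain ⟨hrd, -⟩ := Nat.mem_divisors.mp hr
          exact Finset.mem_Icc.mpr
            ⟨Nat.pos_of_dvd_of_pos hrd (Nat.pos_of_ne_zero (NeZero.ne q)),
             Nat.le_of_dvd (Nat.pos_of_ne_zero (NeZero.ne q)) hrd⟩
        · intro r _ _
          positivity
      have t3 := sum_inv_sq_le q
      have : (0 : ℝ) < 1 / q := by positivity
      linarith
    calc ∑ x : Fin D → ZMod q, ν x ^ 2
        ≤ (∑ r ∈ q.divisors, (r : ℝ) ^ (-(D : ℤ))) * (q : ℝ) ^ (-(D : ℤ)) := by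
          rw [part1, mul_comm]
          exact mul_le_mul_of_nonneg_right hSbound (le_of_lt hqD)
      _ ≤ 2 * (q : ℝ) ^ (-(D : ℤ)) :=
          mul_le_mul_of_nonneg_right hdiv2 (le_of_lt hqD)
end
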